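/- arXiv:2410.20565 — 3 statements merged into one kernel-verified Lean document; each statement's English description precedes it below -/
import Mathlib

section
/- Let K ⊆ K' be simplicial complexes with K' = K ∪ {σ} for a single simplex σ. Then the inclusion-induced map on boundary groups B(K) → B(K') (over ℤ/2, all degrees) is injective, and if the induced map on homology H(K) → H(K') is injective then B(K) = B(K'). -/
/-- A simplex is a finite set of (natural-number) vertices. -/
abbrev Simplex : Type := Finset ℕ

/-- A chain over ℤ/2 (all degrees together) is a finitely supported
function from simplices to ℤ/2. -/
abbrev Chain : Type := Simplex →₀ ZMod 2

/-- A (finite) simplicial complex: a finite set of simplices closed under faces. -/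
def IsComplex (K : Finset Simplex) : Prop := ∀ s ∈ K, ∀ t ⊆ s, t ∈ K

/-- Boundary of a single simplex over ℤ/2. -/
noncomputable def bdrySimplex (s : Simplex) : Chain :=
  ∑ x ∈ s, Finsupp.single (s.erase x) 1

/-- The boundary operator on chains (all degrees), over ℤ/2. -/
noncomputable def bdry : Chain →ₗ[ZMod 2] Chain :=
  Finsupp.lsum (ZMod 2) fun s => LinearMap.toSpanSingleton (ZMod 2) Chain (bdrySimplex s)

/-- The chain group of a complex `K`: chains supported on `K`. -/
noncomputable def chainsOf (K : Finset Simplex) : Submodule (ZMod 2) Chain :=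
  Finsupp.supported (ZMod 2) (ZMod 2) (↑K : Set Simplex)

/-- The cycle group `Z(K)` (all degrees). -/
noncomputable def cyclesOf (K : Finset Simplex) : Submodule (ZMod 2) Chain :=
  chainsOf K ⊓ LinearMap.ker bdry

/-- The boundary group `B(K)` (all degrees). -/
noncomputable def bdriesOf (K : Finset Simplex) : Submodule (ZMod 2) Chain :=
  Submodule.map bdry (chainsOf K)

theorem chainsOf_mono {K K' : Finset Simplex} (h : K ⊆ K') : chainsOf K ≤ chainsOf K' :=
  Finsupp.supported_mono (by exact_mod_cast h)

theorem cyclesOf_mono {K K' : Finset Simplex} (h : K ⊆ K') : cyclesOf K ≤ cyclesOf K' :=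
  inf_le_inf_right _ (chainsOf_mono h)

theorem bdriesOf_mono {K K' : Finset Simplex} (h : K ⊆ K') : bdriesOf K ≤ bdriesOf K' :=
  Submodule.map_mono (chainsOf_mono h)

/-- `B(K)` viewed inside `Z(K)`. -/
noncomputable def homologyRel (K : Finset Simplex) : Submodule (ZMod 2) (cyclesOf K) :=
  (bdriesOf K).comap (cyclesOf K).subtype

/-- The homology `H(K) = Z(K)/B(K)` over ℤ/2, all degrees summed. -/
noncomputable abbrev homology (K : Finset Simplex) :=
  cyclesOf K ⧸ homologyRel K

/-- The inclusion-induced map on homology. -/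
noncomputable def inducedH {K K' : Finset Simplex} (h : K ⊆ K') :
    homology K →ₗ[ZMod 2] homology K' :=
  Submodule.mapQ _ _ (Submodule.inclusion (cyclesOf_mono h)) (by
    intro x hx
    simp only [homologyRel, Submodule.mem_comap, Submodule.coe_subtype,
      Submodule.coe_inclusion] at hx ⊢
    exact bdriesOf_mono h hx)

open Classical in
/-- The homology class of a chain (zero if the chain is not a cycle of `K`). -/
noncomputable def hclass (K : Finset Simplex) (c : Chain) : homology K :=
  if h : c ∈ cyclesOf K then Submodule.Quotient.mk ⟨c, h⟩ else 0


lemma bdry_single (s : Simplex) : bdry (Finsupp.single s 1) = bdrySimplex s := by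
  simp [bdry]

lemma bdry_bdrySimplex (s : Simplex) : bdry (bdrySimplex s) = 0 := by
  have h : bdry (bdrySimplex s)
      = ∑ p ∈ s.sigma (fun x => s.erase x),
          Finsupp.single ((s.erase p.1).erase p.2) (1 : ZMod 2) := by
    rw [bdrySimplex, map_sum, Finset.sum_sigma]
    refine Finset.sum_congr rfl fun x hx => ?_
    rw [bdry_single, bdrySimplex]
  rw [h]
  refine Finset.sum_involution (fun p _ => ⟨p.2, p.1⟩) ?_ ?_ ?_ ?_
  · intro p hp
    rw [Finset.erase_right_comm (a := p.2) (b := p.1), ← two_smul (ZMod 2)]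
    rw [show (2 : ZMod 2) = 0 from rfl, zero_smul]
  · intro p hp _
    simp only [Finset.mem_sigma, Finset.mem_erase] at hp
    intro h
    have := congrArg Sigma.fst h
    simp only at this
    exact hp.2.1 this
  · intro p hp
    simp only [Finset.mem_sigma, Finset.mem_erase] at hp ⊢
    exact ⟨hp.2.2, hp.2.1.symm, hp.1⟩
  · intro p hp; rfl

/-- for a single-simplex forward inclusion `K ↪ K' = K ∪ {σ}`, the
inclusion-induced map on boundary groups is injective, and injectivity of the induced
map on homology forces `B(K) = B(K')`. -/
theorem stmt0 (K : Finset Simplex) (σ : Simplex) (hσ : σ ∉ K)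
    (hK : IsComplex K) (hK' : IsComplex (insert σ K)) :
    Function.Injective (Submodule.inclusion (bdriesOf_mono (K.subset_insert σ))) ∧
    (Function.Injective (inducedH (K.subset_insert σ)) →
      bdriesOf K = bdriesOf (insert σ K)) := by
  constructor
  · exact Submodule.inclusion_injective _
  intro hinj
  refine le_antisymm (bdriesOf_mono (K.subset_insert σ)) ?_
  have hfaces : ∀ x ∈ σ, σ.erase x ∈ K := by
    intro x hx
    have h1 : σ.erase x ∈ insert σ K :=
      hK' σ (Finset.mem_insert_self σ K) _ (Finset.erase_subset x σ)
    rcases Finset.mem_insert.1 h1 with h | h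
    · exact absurd (Finset.erase_eq_self.mp h) (by simpa using hx)
    · exact h
  have hchain : bdrySimplex σ ∈ chainsOf K := by
    rw [bdrySimplex]
    exact Submodule.sum_mem _ fun x hx =>
      Finsupp.single_mem_supported _ _ (hfaces x hx)
  have hcyc : bdrySimplex σ ∈ cyclesOf K :=
    ⟨hchain, by simp [LinearMap.mem_ker, bdry_bdrySimplex]⟩
  have hB' : bdrySimplex σ ∈ bdriesOf (insert σ K) :=
    ⟨Finsupp.single σ 1,
      Finsupp.single_mem_supported _ _ (by exact_mod_cast Finset.mem_insert_self σ K),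
      bdry_single σ⟩
  have hz : (Submodule.Quotient.mk ⟨bdrySimplex σ, hcyc⟩ : homology K) = 0 := by
    apply hinj
    rw [map_zero, inducedH, Submodule.mapQ_apply, Submodule.Quotient.mk_eq_zero]
    simpa [homologyRel] using hB'
  have hBσ : bdrySimplex σ ∈ bdriesOf K := by
    have := (Submodule.Quotient.mk_eq_zero _).1 hz
    simpa [homologyRel] using this
  rintro c ⟨d, hd, rfl⟩
  have hd' : d - d σ • Finsupp.single σ 1 ∈ chainsOf K := by
    rw [chainsOf, Finsupp.mem_supported]
    intro t ht
    simp only [Finset.mem_coe, Finsupp.mem_support_iff, Finsupp.sub_apply, Finsupp.smul_apply,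
      Finsupp.single_apply, smul_eq_mul] at ht
    by_cases h : σ = t
    · subst h; simp at ht
    · rw [if_neg h, mul_zero, sub_zero] at ht
      have htK' : t ∈ (↑(insert σ K) : Set Simplex) :=
        (Finsupp.mem_supported _ _).1 hd (Finsupp.mem_support_iff.2 ht)
      simp only [Finset.coe_insert, Set.mem_insert_iff, Finset.mem_coe] at htK'
      rcases htK' with h' | h'
      · exact absurd h'.symm h
      · exact h'
  have hsplit : bdry d = bdry (d - d σ • Finsupp.single σ 1) + d σ • bdrySimplex σ := by
    rw [map_sub, map_smul, bdry_single, sub_add_cancel]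
  rw [hsplit]
  exact Submodule.add_mem _ ⟨_, hd', rfl⟩ (Submodule.smul_mem _ _ hBσ)
end

section
/- Let F : ∅ = K₀ ↔ K₁ ↔ ⋯ ↔ K_i be a simplex-wise zigzag filtration (each arrow adds or deletes one simplex), and let [b,i] and [b',i] be intervals in the degree-p homology barcode of F with b ≺ b' in the birth order. If rep = {z_α | α ∈ [b,i]} and rep' = {z'_α | α ∈ [b',i]} are p-th homology representatives for [b,i] and [b',i] respectively, then the sequence rep ⊞ rep' defined by z̄_α = z_α + z'_α for α ≥ max(b,b') and z̄_α = z'_α for b' ≤ α < b (when b' < b), is again a p-th homology representative for [b',i]. -/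
/-- A simplex-wise zigzag filtration of length `m` starting at the empty complex:
each arrow inserts or deletes exactly one simplex. -/
structure ZZ (m : ℕ) where
  K : ℕ → Finset Simplex
  cpx : ∀ j, IsComplex (K j)
  empty0 : K 0 = ∅
  step : ∀ j < m, (∃ σ, σ ∉ K j ∧ K (j+1) = insert σ (K j)) ∨
                  (∃ σ, σ ∉ K (j+1) ∧ K j = insert σ (K (j+1)))

/-- Homology representative for the interval `[b,d]` of the zigzag module of `F_i`
(Definition of homology representatives). -/
def IsHRep {m : ℕ} (F : ZZ m) (i b d : ℕ) (z : ℕ → Chain) : Prop :=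
  1 ≤ b ∧ b ≤ d ∧ d ≤ i ∧ i ≤ m ∧
  (∀ α, b ≤ α → α ≤ d → z α ∈ cyclesOf (F.K α)) ∧
  (∀ α, b ≤ α → α < d →
    (F.K α ⊆ F.K (α+1) → z α + z (α+1) ∈ bdriesOf (F.K (α+1))) ∧
    (F.K (α+1) ⊆ F.K α → z α + z (α+1) ∈ bdriesOf (F.K α))) ∧
  ((F.K (b-1) ⊆ F.K b → z b ∉ cyclesOf (F.K (b-1))) ∧
   (F.K b ⊆ F.K (b-1) → z b ∈ bdriesOf (F.K (b-1)) ∧ z b ∉ bdriesOf (F.K b))) ∧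
  (d < i →
    (F.K (d+1) ⊆ F.K d → z d ∉ cyclesOf (F.K (d+1))) ∧
    (F.K d ⊆ F.K (d+1) → z d ∈ bdriesOf (F.K (d+1)) ∧ z d ∉ bdriesOf (F.K d)))

/-- Boundary representative for the interval `[b,d]` of the boundary zigzag module of `F_i`. -/
def IsBRep {m : ℕ} (F : ZZ m) (i b d : ℕ) (z : ℕ → Chain) : Prop :=
  1 ≤ b ∧ b ≤ d ∧ d ≤ i ∧ i ≤ m ∧
  (∀ α, b ≤ α → α ≤ d → z α ∈ bdriesOf (F.K α)) ∧
  (∀ α, b ≤ α → α < d → z (α+1) = z α) ∧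
  (F.K (b-1) ⊆ F.K b ∧ z b ∉ bdriesOf (F.K (b-1))) ∧
  (d < i → F.K (d+1) ⊆ F.K d ∧ z d ∉ bdriesOf (F.K (d+1)))

/-- `j ∈ P^H(F_i)`: homology birth index. -/
def HBirthAt {m : ℕ} (F : ZZ m) (i j : ℕ) : Prop :=
  1 ≤ j ∧ j ≤ i ∧ i ≤ m ∧
  ((∃ h : F.K (j-1) ⊆ F.K j, Function.Injective (inducedH h)) ∨
   (∃ h : F.K j ⊆ F.K (j-1), Function.Surjective (inducedH h)))

/-- `j ∈ P^B(F_i)`: boundary birth index. -/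
def BBirthAt {m : ℕ} (F : ZZ m) (i j : ℕ) : Prop :=
  1 ≤ j ∧ j ≤ i ∧ i ≤ m ∧ F.K (j-1) ⊆ F.K j ∧ bdriesOf (F.K (j-1)) ≠ bdriesOf (F.K j)

/-- `j ∈ N^H(F_i)` for `j < i` (the arrow at `j` kills a homology class). -/
def HDeathAt {m : ℕ} (F : ZZ m) (i j : ℕ) : Prop :=
  j < i ∧ i ≤ m ∧
  ((∃ h : F.K j ⊆ F.K (j+1), ¬ Function.Injective (inducedH h)) ∨
   (∃ h : F.K (j+1) ⊆ F.K j, ¬ Function.Surjective (inducedH h)))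

/-- `j ∈ N^B(F_i)` for `j < i` (the arrow at `j` kills a boundary class). -/
def BDeathAt {m : ℕ} (F : ZZ m) (i j : ℕ) : Prop :=
  j < i ∧ i ≤ m ∧
  ∃ _ : F.K (j+1) ⊆ F.K j, bdriesOf (F.K (j+1)) ≠ bdriesOf (F.K j)

/-- The total order `≺` on birth indices (Definition of the total order). -/
def Prec {m : ℕ} (F : ZZ m) (i b b' : ℕ) : Prop :=
  (BBirthAt F i b ∧ HBirthAt F i b') ∨
  (BBirthAt F i b ∧ BBirthAt F i b' ∧ b < b') ∨
  (HBirthAt F i b ∧ HBirthAt F i b' ∧ b < b' ∧ F.K (b'-1) ⊆ F.K b') ∨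
  (HBirthAt F i b ∧ HBirthAt F i b' ∧ b' < b ∧ F.K b ⊆ F.K (b-1))

/-- A wire at index `i` (Definition of wires). -/
def IsWire {m : ℕ} (F : ZZ m) (i : ℕ) (c : Chain) : Prop :=
  1 ≤ i ∧ i ≤ m ∧ c ∈ cyclesOf (F.K i) ∧
  ((F.K (i-1) ⊆ F.K i ∧ c ∉ cyclesOf (F.K (i-1))) ∨
   (F.K i ⊆ F.K (i-1) ∧ c ∈ bdriesOf (F.K (i-1)) ∧ c ∉ bdriesOf (F.K i)) ∨
   (F.K (i-1) ⊆ F.K i ∧ c ∈ bdriesOf (F.K i) ∧ c ∉ bdriesOf (F.K (i-1))))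

/-- Partial sum of the wires in the bundle `W` whose starting index is `≤ α`. -/
noncomputable def psum (w : ℕ → Chain) (W : Finset ℕ) (α : ℕ) : Chain :=
  ∑ j ∈ W.filter (· ≤ α), w j

/-- A boundary bundle `W` (with wires `w`) alive till index `b`. -/
def AliveTill {m : ℕ} (F : ZZ m) (w : ℕ → Chain) (W : Finset ℕ) (b : ℕ) : Prop :=
  ∀ α ≤ b, psum w W α ∈ bdriesOf (F.K α)

/-- `S` (with representatives `z`) is the homology barcode `Pers^H(F_i)`:
each interval carries a representative and, at every index `j`, the classes of the
representative cycles of the intervals containing `j` form a basis of `H(K_j)`. -/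
def IsHBarcode {m : ℕ} (F : ZZ m) (i : ℕ) (S : Finset (ℕ × ℕ))
    (z : ℕ × ℕ → ℕ → Chain) : Prop :=
  (∀ q ∈ S, IsHRep F i q.1 q.2 (z q)) ∧
  ∀ j ≤ i,
    LinearIndependent (ZMod 2)
      (fun q : {q : ℕ × ℕ // q ∈ S ∧ q.1 ≤ j ∧ j ≤ q.2} => hclass (F.K j) (z q.val j)) ∧
    Submodule.span (ZMod 2)
      (Set.range (fun q : {q : ℕ × ℕ // q ∈ S ∧ q.1 ≤ j ∧ j ≤ q.2} =>
        hclass (F.K j) (z q.val j))) = ⊤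

/-- `S` (with representatives `z`) is the boundary barcode `Pers^B(F_i)`. -/
def IsBBarcode {m : ℕ} (F : ZZ m) (i : ℕ) (S : Finset (ℕ × ℕ))
    (z : ℕ × ℕ → ℕ → Chain) : Prop :=
  (∀ q ∈ S, IsBRep F i q.1 q.2 (z q)) ∧
  ∀ j ≤ i,
    LinearIndependent (ZMod 2)
      (fun q : {q : ℕ × ℕ // q ∈ S ∧ q.1 ≤ j ∧ j ≤ q.2} => z q.val j) ∧
    Submodule.span (ZMod 2)
      (Set.range (fun q : {q : ℕ × ℕ // q ∈ S ∧ q.1 ≤ j ∧ j ≤ q.2} =>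
        z q.val j)) = bdriesOf (F.K j)


/-- A chain of pure degree `p` (every simplex has `p+1` vertices). -/
def IsDeg (p : ℕ) (c : Chain) : Prop := ∀ s ∈ c.support, s.card = p + 1

/-!
Extending `rep` by zero below `b`, the sequence `rep ⊞ rep'` is `rep'` plus the indicator
`𝟙_{α ≥ b} z_α`. Adding to a representative of `[b', i]` a sequence of cycles that is linked
across every arrow and whose value at `b'` already exists before the birth (a cycle of
`K_{b'-1}` for a forward arrow, a boundary of `K_{b'}` for a backward one) keeps it a
representative of `[b', i]`.

If `b' < b`, the arrow at `b` is backward, so `z_b` is a boundary of `K_{b-1}` and the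
zero-extended `rep` stays linked across it, while its value at `b'` is zero. If `b < b'`, the
arrow at `b'` inserts a simplex `σ` with no coface in `K_{b'}`, so no boundary of `K_{b'}`
involves `σ`; since `z_{b'}` is homologous in `K_{b'}` to the cycle `z_{b'-1}` of `K_{b'-1}`,
it is itself a cycle of `K_{b'-1}`.
-/

theorem IsDeg.add {p : ℕ} {c d : Chain} (hc : IsDeg p c) (hd : IsDeg p d) : IsDeg p (c + d) :=
  fun s hs => (Finset.mem_union.mp (Finsupp.support_add hs)).elim (hc s) (hd s)

theorem bdrySimplex_apply_eq_zero_of_mem_insert {K : Finset Simplex} (hK : IsComplex K)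
    {σ s : Simplex} (hσ : σ ∉ K) (hs : s ∈ insert σ K) : bdrySimplex s σ = 0 := by
  rw [bdrySimplex, Finsupp.finsetSum_apply]
  refine Finset.sum_eq_zero fun x hx => Finsupp.single_eq_of_ne fun hfacet => ?_
  rcases Finset.mem_insert.mp hs with rfl | hsK
  · exact Finset.notMem_erase x _ (hfacet ▸ hx)
  · exact hσ (hfacet ▸ hK s hsK _ (Finset.erase_subset x s))

theorem bdry_apply_eq_zero_of_mem_chainsOf_insert {K : Finset Simplex} (hK : IsComplex K)
    {σ : Simplex} (hσ : σ ∉ K) {c : Chain} (hc : c ∈ chainsOf (insert σ K)) :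
    bdry c σ = 0 := by
  have hsupp : ↑c.support ⊆ (↑(insert σ K) : Set Simplex) := hc
  rw [bdry, Finsupp.lsum_apply, Finsupp.sum, Finsupp.finsetSum_apply]
  refine Finset.sum_eq_zero fun s hs => ?_
  rw [LinearMap.toSpanSingleton_apply, Finsupp.smul_apply,
    bdrySimplex_apply_eq_zero_of_mem_insert hK hσ (by exact_mod_cast hsupp hs), smul_zero]

theorem mem_cyclesOf_of_add_mem_bdriesOf_insert {K : Finset Simplex} (hK : IsComplex K)
    {σ : Simplex} (hσ : σ ∉ K) {x y : Chain} (hx : x ∈ cyclesOf K)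
    (hy : y ∈ cyclesOf (insert σ K)) (hxy : x + y ∈ bdriesOf (insert σ K)) :
    y ∈ cyclesOf K := by
  obtain ⟨c, hc, hcxy⟩ := hxy
  have hxσ : x σ = 0 := (Finsupp.mem_supported' _ x).mp hx.1 σ hσ
  have hyσ : y σ = 0 := by
    rw [← add_sub_cancel_left x y, Finsupp.sub_apply, ← hcxy,
      bdry_apply_eq_zero_of_mem_chainsOf_insert hK hσ hc, hxσ, sub_zero]
  refine ⟨(Finsupp.mem_supported' _ y).mpr fun t ht => ?_, hy.2⟩
  by_cases htσ : t = σ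
  · rwa [htσ]
  · exact (Finsupp.mem_supported' _ y).mp hy.1 t (by simp [htσ, ht])

namespace ZZ

variable {m : ℕ} (F : ZZ m)

theorem not_subset_of_subset {j : ℕ} (hj : j < m) (h : F.K j ⊆ F.K (j+1)) :
    ¬ F.K (j+1) ⊆ F.K j := by
  rcases F.step j hj with ⟨σ, hσ, he⟩ | ⟨σ, hσ, he⟩
  · exact fun h' => hσ (h' (he ▸ Finset.mem_insert_self σ _))
  · exact fun _ => hσ (h (he ▸ Finset.mem_insert_self σ _))

def Homologous (α : ℕ) (x y : Chain) : Prop :=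
  (F.K α ⊆ F.K (α+1) → x + y ∈ bdriesOf (F.K (α+1))) ∧
  (F.K (α+1) ⊆ F.K α → x + y ∈ bdriesOf (F.K α))

variable {F}

theorem Homologous.add {α : ℕ} {x y x' y' : Chain} (h : F.Homologous α x y)
    (h' : F.Homologous α x' y') : F.Homologous α (x + x') (y + y') := by
  rw [Homologous, add_add_add_comm]
  exact ⟨fun hf => add_mem (h.1 hf) (h'.1 hf), fun hb => add_mem (h.2 hb) (h'.2 hb)⟩

theorem homologous_zero_zero (α : ℕ) : F.Homologous α 0 0 := by
  simp only [Homologous, add_zero, zero_mem, implies_true, and_self]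

theorem homologous_zero_left_of_backward {α : ℕ} (hα : α < m) (hback : F.K (α+1) ⊆ F.K α)
    {y : Chain} (hy : y ∈ bdriesOf (F.K α)) : F.Homologous α 0 y :=
  ⟨fun hf => absurd hback (F.not_subset_of_subset hα hf), fun _ => (zero_add y).symm ▸ hy⟩

theorem mem_cyclesOf_of_homologous {j : ℕ} (hj : j < m) (hfwd : F.K j ⊆ F.K (j+1))
    {x y : Chain} (hx : x ∈ cyclesOf (F.K j)) (hy : y ∈ cyclesOf (F.K (j+1)))
    (hxy : F.Homologous j x y) : y ∈ cyclesOf (F.K j) := by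
  rcases F.step j hj with ⟨σ, hσ, he⟩ | ⟨σ, hσ, he⟩
  · have hxy := hxy.1 hfwd
    rw [he] at hy hxy
    exact mem_cyclesOf_of_add_mem_bdriesOf_insert (F.cpx j) hσ hx hy hxy
  · exact absurd (hfwd (he ▸ Finset.mem_insert_self σ _)) hσ

end ZZ

section HRep

variable {m i b d : ℕ} {F : ZZ m} {z : ℕ → Chain}

theorem IsHRep.mem_cyclesOf (h : IsHRep F i b d z) {α : ℕ} (hbα : b ≤ α) (hαd : α ≤ d) :
    z α ∈ cyclesOf (F.K α) :=
  h.2.2.2.2.1 α hbα hαd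

theorem IsHRep.homologous (h : IsHRep F i b d z) {α : ℕ} (hbα : b ≤ α) (hαd : α < d) :
    F.Homologous α (z α) (z (α+1)) :=
  h.2.2.2.2.2.1 α hbα hαd

theorem IsHRep.mem_cyclesOf_pred_of_forward (h : IsHRep F i b d z) {α : ℕ} (hbα : b < α)
    (hαd : α ≤ d) (hfwd : F.K (α-1) ⊆ F.K α) : z α ∈ cyclesOf (F.K (α-1)) := by
  obtain ⟨j, rfl⟩ : ∃ j, α = j + 1 := ⟨α - 1, by omega⟩
  rw [Nat.add_sub_cancel] at hfwd ⊢
  have hjm : j < m := by have := h.2.2.1; have := h.2.2.2.1; omega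
  exact ZZ.mem_cyclesOf_of_homologous hjm hfwd (h.mem_cyclesOf (by omega) (by omega))
    (h.mem_cyclesOf (by omega) hαd) (h.homologous (by omega) (by omega))

theorem IsHRep.indicator_mem_cyclesOf (h : IsHRep F i b d z) {α : ℕ} (hαd : α ≤ d) :
    (Set.Ici b).indicator z α ∈ cyclesOf (F.K α) := by
  by_cases hbα : b ≤ α
  · rw [Set.indicator_of_mem (Set.mem_Ici.mpr hbα)]
    exact h.mem_cyclesOf hbα hαd
  · rw [Set.indicator_of_notMem (by rwa [Set.mem_Ici])]
    exact zero_mem _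

theorem IsHRep.homologous_indicator (h : IsHRep F i b d z) {α : ℕ} (hαd : α < d)
    (hα : b ≤ α ∨ F.K b ⊆ F.K (b-1)) :
    F.Homologous α ((Set.Ici b).indicator z α) ((Set.Ici b).indicator z (α+1)) := by
  rcases lt_trichotomy (α+1) b with hlt | rfl | hgt
  · rw [Set.indicator_of_notMem (by rw [Set.mem_Ici]; omega),
      Set.indicator_of_notMem (by rw [Set.mem_Ici]; omega)]
    exact ZZ.homologous_zero_zero α
  · rw [Set.indicator_of_notMem (by rw [Set.mem_Ici]; omega),
      Set.indicator_of_mem (Set.mem_Ici.mpr le_rfl)]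
    rw [Nat.add_sub_cancel] at hα
    have hback : F.K (α+1) ⊆ F.K α := hα.resolve_left (by omega)
    obtain ⟨-, -, hdi, him, -, -, ⟨-, hbirth⟩, -⟩ := h
    rw [Nat.add_sub_cancel] at hbirth
    exact ZZ.homologous_zero_left_of_backward (by omega) hback (hbirth hback).1
  · rw [Set.indicator_of_mem (Set.mem_Ici.mpr (by omega)),
      Set.indicator_of_mem (Set.mem_Ici.mpr (by omega))]
    exact h.homologous (by omega) hαd

theorem IsHRep.add_of_born_earlier (hz : IsHRep F i b i z) {y : ℕ → Chain}
    (hcyc : ∀ α, b ≤ α → α ≤ i → y α ∈ cyclesOf (F.K α))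
    (hhom : ∀ α, b ≤ α → α < i → F.Homologous α (y α) (y (α+1)))
    (hfwd : F.K (b-1) ⊆ F.K b → y b ∈ cyclesOf (F.K (b-1)))
    (hbwd : F.K b ⊆ F.K (b-1) → y b ∈ bdriesOf (F.K b)) :
    IsHRep F i b i (fun α => z α + y α) := by
  obtain ⟨hb1, hbi, -, him, hzc, hzh, ⟨hzf, hzb⟩, -⟩ := hz
  refine ⟨hb1, hbi, le_rfl, him,
    fun α hbα hαi => add_mem (hzc α hbα hαi) (hcyc α hbα hαi),
    fun α hbα hαi => ZZ.Homologous.add (hzh α hbα hαi) (hhom α hbα hαi),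
    ⟨fun hf hmem => ?_, fun hb => ?_⟩, fun hii => absurd hii (lt_irrefl i)⟩
  · exact hzf hf ((Submodule.add_mem_iff_left _ (hfwd hf)).mp hmem)
  · exact ⟨add_mem (hzb hb).1 (bdriesOf_mono hb (hbwd hb)),
      fun hmem => (hzb hb).2 ((Submodule.add_mem_iff_left _ (hbwd hb)).mp hmem)⟩

end HRep

/-- the sum `rep ⊞ rep'` of two p-th homology representatives for
intervals `[b,i]`, `[b',i]` with `b ≺ b'` is a p-th homology representative for `[b',i]`. -/
theorem stmt5 (m i b b' p : ℕ) (F : ZZ m)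
    (z z' : ℕ → Chain)
    (hprec : (b < b' ∧ F.K (b'-1) ⊆ F.K b') ∨ (b' < b ∧ F.K b ⊆ F.K (b-1)))
    (h1 : IsHRep F i b i z) (h2 : IsHRep F i b' i z')
    (hd1 : ∀ α, b ≤ α → α ≤ i → IsDeg p (z α))
    (hd2 : ∀ α, b' ≤ α → α ≤ i → IsDeg p (z' α)) :
    IsHRep F i b' i (fun α => if b ≤ α then z α + z' α else z' α) ∧
    (∀ α, b' ≤ α → α ≤ i →
      IsDeg p (if b ≤ α then z α + z' α else z' α)) := by
  have hsum : (fun α => if b ≤ α then z α + z' α else z' α) =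
      fun α => z' α + (Set.Ici b).indicator z α := by
    funext α
    by_cases hbα : b ≤ α <;> simp [hbα, add_comm]
  have hborn : (F.K (b'-1) ⊆ F.K b' → (Set.Ici b).indicator z b' ∈ cyclesOf (F.K (b'-1))) ∧
      (F.K b' ⊆ F.K (b'-1) → (Set.Ici b).indicator z b' ∈ bdriesOf (F.K b')) := by
    rcases hprec with ⟨hlt, hfwd⟩ | ⟨hlt, -⟩
    · refine ⟨fun _ => ?_, fun hback => ?_⟩
      · rw [Set.indicator_of_mem (Set.mem_Ici.mpr hlt.le)]
        exact h1.mem_cyclesOf_pred_of_forward hlt h2.2.1 hfwd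
      · obtain ⟨hb'1, hb'i, -, him, -⟩ := h2
        have hpred : b' - 1 + 1 = b' := by omega
        exact absurd (hpred ▸ hback) (F.not_subset_of_subset (by omega) (hpred ▸ hfwd))
    · rw [Set.indicator_of_notMem (by rw [Set.mem_Ici]; omega)]
      exact ⟨fun _ => zero_mem _, fun _ => zero_mem _⟩
  refine ⟨hsum ▸ h2.add_of_born_earlier (fun α _ hαi => h1.indicator_mem_cyclesOf hαi)
    (fun α hα hαi => h1.homologous_indicator hαi ?_) hborn.1 hborn.2, fun α hα hαi => ?_⟩
  · rcases hprec with ⟨hlt, -⟩ | ⟨-, hback⟩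
    exacts [Or.inl (by omega), Or.inr hback]
  · split_ifs with hbα
    exacts [(hd1 α hbα hαi).add (hd2 α hα hαi), hd2 α hα hαi]
end

section
/- Let W and W' be boundary bundles alive till indices x and y respectively with y > x. Then the symmetric-difference sum W ⊞ W' is, after restricting to wires with starting index < x, a boundary bundle alive till x. That is, for every α ≤ x, the partial sum Σ_{w_j ∈ W ⊞ W', j ≤ α} w_j lies in B(K_α). -/
open scoped symmDiff

theorem Finset.filter_symmDiff {α : Type*} [DecidableEq α] (p : α → Prop) [DecidablePred p]
    (s t : Finset α) : (s ∆ t).filter p = s.filter p ∆ t.filter p := by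
  ext a
  simp only [Finset.mem_symmDiff, Finset.mem_filter]
  tauto

-- Indices in `s ∩ t` are counted twice on the right, and `a + a = 0`.
theorem Finset.sum_symmDiff_of_add_self {ι M : Type*} [DecidableEq ι] [AddCommMonoid M]
    (hM : ∀ a : M, a + a = 0) (s t : Finset ι) (f : ι → M) :
    ∑ i ∈ s ∆ t, f i = ∑ i ∈ s, f i + ∑ i ∈ t, f i := by
  have hunion : s ∪ t = s ∆ t ∪ s ∩ t := (symmDiff_sup_inf s t).symm
  rw [← Finset.sum_union_inter, hunion,
    Finset.sum_union (s₂ := s ∩ t) (disjoint_symmDiff_inf s t), add_assoc, hM, add_zero]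

theorem chain_add_self (c : Chain) : c + c = 0 := by
  rw [← two_smul (ZMod 2) c, show (2 : ZMod 2) = 0 from rfl, zero_smul]

theorem psum_symmDiff (w : ℕ → Chain) (W W' : Finset ℕ) (α : ℕ) :
    psum w (W ∆ W') α = psum w W α + psum w W' α := by
  rw [psum, Finset.filter_symmDiff, Finset.sum_symmDiff_of_add_self chain_add_self]
  rfl

theorem AliveTill.mono {m : ℕ} {F : ZZ m} {w : ℕ → Chain} {W : Finset ℕ} {b b' : ℕ}
    (hW : AliveTill F w W b) (hb : b' ≤ b) : AliveTill F w W b' :=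
  fun α hα => hW α (hα.trans hb)

theorem AliveTill.symmDiff {m : ℕ} {F : ZZ m} {w : ℕ → Chain} {W W' : Finset ℕ} {b : ℕ}
    (hW : AliveTill F w W b) (hW' : AliveTill F w W' b) : AliveTill F w (W ∆ W') b := by
  intro α hα
  rw [psum_symmDiff]
  exact (bdriesOf (F.K α)).add_mem (hW α hα) (hW' α hα)

/-- if `W` is a boundary bundle alive till `x` and `W'` is alive till
`y > x`, then the symmetric-difference sum `W ⊞ W'` is alive till `x`: for every
`α ≤ x` the partial sum `Σ_{w_j ∈ W ⊞ W', j ≤ α} w_j` lies in `B(K_α)`. -/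
theorem stmt10 (m x y : ℕ) (F : ZZ m) (w : ℕ → Chain) (W W' : Finset ℕ)
    (hW : AliveTill F w W x) (hW' : AliveTill F w W' y) (hxy : x < y) :
    ∀ α ≤ x, psum w (symmDiff W W') α ∈ bdriesOf (F.K α) :=
  hW.symmDiff (hW'.mono hxy.le)
end
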